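/- The inclusion LZG ⊇ ZG is strict: the 4-element semigroup S = {a, b, ab, 0} with a² = a, b² = b, ba = 0 (the syntactic semigroup of a*b*) is not in ZG, but every local monoid eSe of S satisfies the ZG equation x^{ω+1} y = y x^{ω+1}. -/

import Mathlib

/-- `spow x n` is `x ^ n` for `n ≥ 1` (with the junk value `x` at `n = 0`). -/
def spow {S : Type*} [Mul S] (x : S) : ℕ → S
  | 0 => x
  | 1 => x
  | n + 2 => spow x (n + 1) * x

/-- `n` is the idempotent power of `x`: the least positive integer such that
`x ^ n` is idempotent. -/
def IsIdemPow {S : Type*} [Mul S] (x : S) (n : ℕ) : Prop :=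
  0 < n ∧ spow x n * spow x n = spow x n ∧
    ∀ m, 0 < m → spow x m * spow x m = spow x m → n ≤ m

/-- The syntactic semigroup of `a*b*`: `{a, b, ab, 0}` with
`a² = a`, `b² = b`, `ba = 0`. -/
inductive S4 where
  | a | b | ab | z
deriving DecidableEq

instance : Fintype S4 := ⟨{.a, .b, .ab, .z}, by intro x; cases x <;> simp⟩

/-- The multiplication table of `S4`. -/
def S4.mul : S4 → S4 → S4
  | .a, .a => .a
  | .a, .b => .ab
  | .a, .ab => .ab
  | .b, .b => .b
  | .ab, .b => .ab
  | _, _ => .z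

instance : Mul S4 := ⟨S4.mul⟩

instance : Semigroup S4 := { (inferInstance : Mul S4) with mul_assoc := by decide }

theorem spow_commute {S : Type*} [Semigroup S] {x y : S} (h : Commute x y) :
    ∀ n, Commute (spow x n) y
  | 0 => h
  | 1 => h
  | n + 2 => (spow_commute h (n + 1)).mul_left h

theorem isIdemPow_one_of_mul_self {S : Type*} [Mul S] {x : S} (h : x * x = x) : IsIdemPow x 1 :=
  ⟨one_pos, h, fun _ hm _ => hm⟩

-- The local monoids are `a S4 a = {a, 0}`, `b S4 b = {b, 0}` and `0 S4 0 = {0}`.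
theorem S4.localMonoid_commute :
    ∀ e s t : S4, e * e = e → Commute (e * s * e) (e * t * e) := by
  unfold Commute SemiconjBy
  decide

/-- `S4` witnesses the strictness of `ZG ⊆ LZG`: it is not in `ZG`, but every
local monoid `e S4 e` satisfies the ZG equation. -/
theorem lzg_strict :
    (¬ ∀ (x y : S4) (n : ℕ), IsIdemPow x n →
        spow x (n + 1) * y = y * spow x (n + 1)) ∧
    (∀ e : S4, e * e = e →
      ∀ x y : S4, (∃ s, x = e * s * e) → (∃ s, y = e * s * e) →
        ∀ n : ℕ, IsIdemPow x n →
          spow x (n + 1) * y = y * spow x (n + 1)) := by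
  constructor
  · intro hZG
    have hab : spow S4.a 2 * S4.b = S4.b * spow S4.a 2 :=
      hZG S4.a S4.b 1 (isIdemPow_one_of_mul_self rfl)
    exact absurd hab (by decide)  -- `a * b = ab` but `b * a = 0`
  · rintro e he _ _ ⟨s, rfl⟩ ⟨t, rfl⟩ n -
    exact (spow_commute (S4.localMonoid_commute e s t he) (n + 1)).eq
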